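/- Fix an integer k ≥ 1, let φ_k^min = arccos(1 − (2 − 2cos(π/(2k+1)))/(1 − cos(π/(2k−1)))), and let λ₀ = sin²(π/(4k+2)) be the left endpoint of Λ_k. Then the function φ ↦ P_k^φ(λ₀) is strictly increasing on (φ_k^min, π], and P_k^π(λ₀) = 1. -/

import Mathlib

/-!
Write `δ(φ) = arccos (1 - λ (1 - cos φ))` and `m = 2k + 1`. Since `sin² θ = λ`,
`cos δ = 1 - λ (1 - cos φ)` and `sin² δ = (1 - cos δ)(1 + cos δ)`, the success probability
collapses to `P = 1 - (1 - λ) (1 + cos (m δ)) / (1 + cos δ)`.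
The angle `δ` increases strictly with `φ` on `[0, π]`, and for `λ = λ₀ = sin² (π / (2m))` it
reaches `δ(π) = π / m`. On `[0, π / m]` the ratio
`(1 + cos (m δ)) / (1 + cos δ) = (cos (m δ / 2) / cos (δ / 2))²` strictly decreases, by a
product-to-sum comparison. Hence `P` increases strictly on all of `(0, π]`, and `P = 1` at
`φ = π` because `cos (m δ(π)) = cos π = -1`.
-/

/-- The success probability `P_k^φ(λ)` of the matched-phase Grover algorithm after
`k` iterations: `P_k^φ(λ) = A·cos((2k+1)δ) + B` where `θ = arcsin √λ`,
`δ = arccos (1 − λ(1 − cos φ))`, `A = (sin²θ/sin²δ)(cos φ − cos δ)` and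
`B = (sin²θ/sin²δ)(1 − cos φ·cos δ)`. -/
noncomputable def grovP (k : ℕ) (φ lam : ℝ) : ℝ :=
  let θ : ℝ := Real.arcsin (Real.sqrt lam)
  let δ : ℝ := Real.arccos (1 - lam * (1 - Real.cos φ))
  let A : ℝ := Real.sin θ ^ 2 / Real.sin δ ^ 2 * (Real.cos φ - Real.cos δ)
  let B : ℝ := Real.sin θ ^ 2 / Real.sin δ ^ 2 * (1 - Real.cos φ * Real.cos δ)
  A * Real.cos ((2 * (k : ℝ) + 1) * δ) + B

/-- `φ_k^min = arccos(1 − (2 − 2cos(π/(2k+1)))/(1 − cos(π/(2k−1))))`. -/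
noncomputable def phiMin (k : ℕ) : ℝ :=
  Real.arccos (1 - (2 - 2 * Real.cos (Real.pi / (2 * (k : ℝ) + 1))) /
    (1 - Real.cos (Real.pi / (2 * (k : ℝ) - 1))))

open Real Set

noncomputable def grovDelta (lam φ : ℝ) : ℝ :=
  arccos (1 - lam * (1 - cos φ))

lemma grovDelta_strictMonoOn {lam : ℝ} (h0 : 0 < lam) (h1 : lam ≤ 1) :
    StrictMonoOn (grovDelta lam) (Icc 0 π) := by
  intro φ₁ hφ₁ φ₂ hφ₂ hφ
  have hcos := cos_lt_cos_of_nonneg_of_le_pi hφ₁.1 hφ₂.2 hφ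
  apply strictAntiOn_arccos
  · constructor <;> nlinarith [neg_one_le_cos φ₂, cos_le_one φ₂]
  · constructor <;> nlinarith [neg_one_le_cos φ₁, cos_le_one φ₁]
  · nlinarith

lemma grovDelta_sin_sq_pi {a : ℝ} (h0 : 0 ≤ a) (h1 : a ≤ π / 2) :
    grovDelta (sin a ^ 2) π = 2 * a := by
  have hcos : 1 - sin a ^ 2 * (1 - -1) = cos (2 * a) := by rw [cos_two_mul, cos_sq']; ring
  rw [grovDelta, cos_pi, hcos, arccos_cos (by linarith) (by linarith)]

lemma grovP_eq_one_sub (k : ℕ) {lam φ : ℝ} (h0 : 0 < lam) (h1 : lam < 1) (hφ : cos φ < 1) :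
    grovP k φ lam = 1 - (1 - lam) *
      ((1 + cos ((2 * k + 1) * grovDelta lam φ)) / (1 + cos (grovDelta lam φ))) := by
  have hc1 : 1 - lam * (1 - cos φ) < 1 := by nlinarith
  have hc2 : -1 < 1 - lam * (1 - cos φ) := by nlinarith [neg_one_le_cos φ]
  have hcos : cos (grovDelta lam φ) = 1 - lam * (1 - cos φ) := cos_arccos hc2.le hc1.le
  have hsin : sin (grovDelta lam φ) ^ 2 = 1 - (1 - lam * (1 - cos φ)) ^ 2 := by
    rw [grovDelta, sin_arccos, sq_sqrt (by nlinarith)]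
  have hθ : sin (arcsin (√lam)) ^ 2 = lam := by
    rw [sin_arcsin (by linarith [sqrt_nonneg lam]) (sqrt_le_one.2 h1.le), sq_sqrt h0.le]
  unfold grovP
  dsimp only
  rw [← grovDelta, hθ, hsin, hcos]
  have : 1 - (1 - lam * (1 - cos φ)) ^ 2 ≠ 0 := by nlinarith
  have : 1 + (1 - lam * (1 - cos φ)) ≠ 0 := by linarith
  field_simp
  ring

lemma one_add_cos_eq_two_mul_cos_half_sq (x : ℝ) : 1 + cos x = 2 * cos (x / 2) ^ 2 := by
  rw [cos_sq (x / 2), mul_div_cancel₀ x two_ne_zero]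
  ring

lemma cos_mul_mul_cos_lt {m y₁ y₂ : ℝ} (hm : 1 < m) (hy₁ : 0 ≤ y₁) (hy : y₁ < y₂)
    (hy₂ : m * y₂ ≤ π / 2) : cos (m * y₂) * cos y₁ < cos (m * y₁) * cos y₂ := by
  have hsum : cos (m * y₂ + y₁) < cos (m * y₁ + y₂) :=
    cos_lt_cos_of_nonneg_of_le_pi (by nlinarith) (by nlinarith) (by nlinarith)
  have hdiff : cos (m * y₂ - y₁) ≤ cos (m * y₁ - y₂) := by
    rw [← cos_abs (m * y₁ - y₂)]
    exact cos_le_cos_of_nonneg_of_le_pi (abs_nonneg _) (by nlinarith)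
      (abs_le.2 ⟨by nlinarith, by nlinarith⟩)
  have prod_eq (a b : ℝ) : cos a * cos b = (cos (a - b) + cos (a + b)) / 2 := by
    rw [cos_sub, cos_add]; ring
  rw [prod_eq, prod_eq]
  linarith

lemma strictAntiOn_one_add_cos_mul_div {m : ℝ} (hm : 1 < m) :
    StrictAntiOn (fun x => (1 + cos (m * x)) / (1 + cos x)) (Icc 0 (π / m)) := by
  rintro x₁ ⟨hx₁, -⟩ x₂ ⟨-, hx₂⟩ hx
  have hπ := pi_pos
  have hmx₂ : m * (x₂ / 2) ≤ π / 2 := by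
    rw [le_div_iff₀ (by linarith)] at hx₂; linarith
  have hc₁ : 0 < cos (x₁ / 2) := cos_pos_of_mem_Ioo ⟨by linarith, by nlinarith⟩
  have hc₂ : 0 < cos (x₂ / 2) := cos_pos_of_mem_Ioo ⟨by linarith, by nlinarith⟩
  have hC₂ : 0 ≤ cos (m * (x₂ / 2)) := cos_nonneg_of_mem_Icc ⟨by nlinarith, hmx₂⟩
  have key := pow_lt_pow_left₀
    (cos_mul_mul_cos_lt (y₁ := x₁ / 2) (y₂ := x₂ / 2) hm (by linarith) (by linarith) hmx₂)
    (by positivity) two_ne_zero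
  simp only [one_add_cos_eq_two_mul_cos_half_sq, mul_div_assoc m]
  rw [div_lt_div_iff₀ (by positivity) (by positivity)]
  nlinarith [key]

lemma grovP_strictMonoOn {k : ℕ} (hk : 1 ≤ k) {lam : ℝ} (h0 : 0 < lam) (h1 : lam < 1)
    (hδ : (2 * k + 1) * grovDelta lam π ≤ π) :
    StrictMonoOn (fun φ => grovP k φ lam) (Ioc 0 π) := by
  have hm : (1 : ℝ) < 2 * k + 1 := by
    have : (1 : ℝ) ≤ k := by exact_mod_cast hk
    linarith
  have hcos {φ : ℝ} (hφ : φ ∈ Ioc 0 π) : cos φ < 1 := by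
    simpa using cos_lt_cos_of_nonneg_of_le_pi le_rfl hφ.2 hφ.1
  have hδmono := grovDelta_strictMonoOn h0 h1.le
  have hδmem {φ : ℝ} (hφ : φ ∈ Ioc 0 π) :
      grovDelta lam φ ∈ Icc 0 (π / (2 * k + 1)) := by
    refine ⟨arccos_nonneg _, (le_div_iff₀ (by linarith)).2 ?_⟩
    have := hδmono.monotoneOn ⟨hφ.1.le, hφ.2⟩ ⟨pi_pos.le, le_rfl⟩ hφ.2
    nlinarith
  intro φ₁ hφ₁ φ₂ hφ₂ hφ
  have hR := strictAntiOn_one_add_cos_mul_div hm (hδmem hφ₁) (hδmem hφ₂)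
    (hδmono ⟨hφ₁.1.le, hφ₁.2⟩ ⟨hφ₂.1.le, hφ₂.2⟩ hφ)
  have := mul_lt_mul_of_pos_left hR (sub_pos.2 h1)
  simp only [grovP_eq_one_sub k h0 h1 (hcos hφ₁), grovP_eq_one_sub k h0 h1 (hcos hφ₂)]
  linarith

/-- For k ≥ 1 and λ₀ = sin²(π/(4k+2)), the function
φ ↦ P_k^φ(λ₀) is strictly increasing on (φ_k^min, π], and P_k^π(λ₀) = 1. -/
theorem left_endpoint_probability_increasing_in_phase
    (k : ℕ) (hk : 1 ≤ k) (lam₀ : ℝ)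
    (hlam₀ : lam₀ = Real.sin (Real.pi / (4 * (k : ℝ) + 2)) ^ 2) :
    StrictMonoOn (fun φ => grovP k φ lam₀) (Set.Ioc (phiMin k) Real.pi) ∧
      grovP k Real.pi lam₀ = 1 := by
  have hk' : (1 : ℝ) ≤ k := by exact_mod_cast hk
  have hma : (2 * k + 1) * (2 * (π / (4 * (k : ℝ) + 2))) = π := by field_simp; ring
  set a := π / (4 * (k : ℝ) + 2)
  have ha0 : 0 < a := by positivity
  have ha1 : a < π / 2 := by
    rw [div_lt_div_iff₀ (by positivity) two_pos]; nlinarith [pi_pos]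
  have hδπ : grovDelta lam₀ π = 2 * a := hlam₀ ▸ grovDelta_sin_sq_pi ha0.le ha1.le
  have hsin : 0 < sin a := sin_pos_of_pos_of_lt_pi ha0 (by linarith)
  have hcos : 0 < cos a := cos_pos_of_mem_Ioo ⟨by linarith, ha1⟩
  have h0 : 0 < lam₀ := hlam₀ ▸ by positivity
  have h1 : lam₀ < 1 := by nlinarith [sin_sq_add_cos_sq a]
  refine ⟨(grovP_strictMonoOn hk h0 h1 (hδπ ▸ hma.le)).mono
    (Ioc_subset_Ioc_left (arccos_nonneg _)), ?_⟩
  rw [grovP_eq_one_sub k h0 h1 (by rw [cos_pi]; norm_num), hδπ, hma, cos_pi]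
  ring
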